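/- For every finite simple graph G, N(diadem(G)) ∖ diadem(G) equals the intersection of the sets N(A) taken over all maximum critical independent sets A of G. -/
import Mathlib
set_option linter.unusedSectionVars false


namespace AlmostBipartite

variable {V : Type*}

/-- The (open) neighborhood `N(X)` of a set of vertices: all vertices having a neighbor in `X`. -/
def nbhd (G : SimpleGraph V) (X : Set V) : Set V := {v | ∃ x ∈ X, G.Adj v x}

/-- The closed neighborhood `N[X] = X ∪ N(X)`. -/
def closedNbhd (G : SimpleGraph V) (X : Set V) : Set V := X ∪ nbhd G X

/-- A set of vertices is independent: no two of its vertices are adjacent. -/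
def IsIndepSet (G : SimpleGraph V) (S : Set V) : Prop :=
  ∀ ⦃a⦄, a ∈ S → ∀ ⦃b⦄, b ∈ S → ¬G.Adj a b

/-- The difference `d(X) = |X| - |N(X)|`. -/
noncomputable def diffOf (G : SimpleGraph V) (X : Set V) : ℤ :=
  (X.ncard : ℤ) - ((nbhd G X).ncard : ℤ)

/-- The critical difference `d(G)`: maximum of `d(I)` over independent sets `I`. -/
noncomputable def critDiff (G : SimpleGraph V) : ℤ :=
  sSup (diffOf G '' {S | IsIndepSet G S})

/-- A critical independent set: an independent set `A` with `d(A) = d(G)`. -/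
def IsCritIndep (G : SimpleGraph V) (A : Set V) : Prop :=
  IsIndepSet G A ∧ diffOf G A = critDiff G

/-- `diadem G` is the union of all critical independent sets of `G`. -/
def diadem (G : SimpleGraph V) : Set V := ⋃₀ {A | IsCritIndep G A}

/-- A maximum critical independent set: a critical independent set of maximum cardinality. -/
def IsMaxCritIndep (G : SimpleGraph V) (A : Set V) : Prop :=
  IsCritIndep G A ∧ ∀ B : Set V, IsCritIndep G B → B.ncard ≤ A.ncard

/-- `nucleus G` is the intersection of all maximum critical independent sets of `G`. -/
def nucleus (G : SimpleGraph V) : Set V := ⋂₀ {A | IsMaxCritIndep G A}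

/-- The independence number `α(G)`. -/
noncomputable def indepNum (G : SimpleGraph V) : ℕ :=
  sSup {n | ∃ S : Set V, IsIndepSet G S ∧ S.ncard = n}

/-- The critical independence number `α'(G)`: cardinality of a maximum critical independent set. -/
noncomputable def critIndepNum (G : SimpleGraph V) : ℕ :=
  sSup {n | ∃ S : Set V, IsCritIndep G S ∧ S.ncard = n}

/-- A maximum independent set. -/
def IsMaxIndep (G : SimpleGraph V) (S : Set V) : Prop :=
  IsIndepSet G S ∧ S.ncard = indepNum G

/-- `corona G` is the union of all maximum independent sets of `G`. -/
def corona (G : SimpleGraph V) : Set V := ⋃₀ {S | IsMaxIndep G S}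

/-- `core G` is the intersection of all maximum independent sets of `G`. -/
def core (G : SimpleGraph V) : Set V := ⋂₀ {S | IsMaxIndep G S}

/-- The matching number `μ(G)`: maximum size of a matching in `G`. -/
noncomputable def matchNum (G : SimpleGraph V) : ℕ :=
  sSup {n | ∃ M : SimpleGraph.Subgraph G, M.IsMatching ∧ M.edgeSet.ncard = n}

/-- `G` is a König-Egerváry graph if `α(G) + μ(G) = n(G)`. -/
def KonigEgervary (G : SimpleGraph V) : Prop :=
  indepNum G + matchNum G = Nat.card V

/-- A closed walk which is an odd cycle. -/
def IsOddCycleWalk (G : SimpleGraph V) {u : V} (c : G.Walk u u) : Prop :=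
  c.IsCycle ∧ Odd c.length

/-- `c` is the unique odd cycle of `G`: it is an odd cycle, and every odd cycle of `G`
has the same edge set as `c`.  A graph admitting such `c` is almost bipartite. -/
def IsUniqueOddCycle (G : SimpleGraph V) {u : V} (c : G.Walk u u) : Prop :=
  IsOddCycleWalk G c ∧
    ∀ (w : V) (c' : G.Walk w w), IsOddCycleWalk G c' →
      {e | e ∈ c'.edges} = {e | e ∈ c.edges}

/-- The vertex-deleted subgraph `G - v`. -/
def deleteVert (G : SimpleGraph V) (v : V) := G.induce {w | w ≠ v}

/-- `ϱ_v(G)`: the number of vertices `v` such that `G - v` is a König-Egerváry graph. -/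
noncomputable def rhoV (G : SimpleGraph V) : ℕ :=
  {v : V | KonigEgervary (deleteVert G v)}.ncard

end AlmostBipartite

open AlmostBipartite


section AuxLemmas

open Set AlmostBipartite

variable {V : Type*} [Fintype V] {G : SimpleGraph V}

lemma nbhd_mono {X Y : Set V} (h : X ⊆ Y) : nbhd G X ⊆ nbhd G Y := by
  rintro v ⟨x, hx, hadj⟩; exact ⟨x, h hx, hadj⟩

lemma nbhd_union (X Y : Set V) : nbhd G (X ∪ Y) = nbhd G X ∪ nbhd G Y := by
  ext v
  constructor
  · rintro ⟨x, hx | hx, hadj⟩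
    exacts [Or.inl ⟨x, hx, hadj⟩, Or.inr ⟨x, hx, hadj⟩]
  · rintro (⟨x, hx, hadj⟩ | ⟨x, hx, hadj⟩)
    exacts [⟨x, Or.inl hx, hadj⟩, ⟨x, Or.inr hx, hadj⟩]

lemma indep_subset {S T : Set V} (h : IsIndepSet G S) (hT : T ⊆ S) : IsIndepSet G T :=
  fun _ ha _ hb => h (hT ha) (hT hb)

lemma indep_not_mem_nbhd {S : Set V} (h : IsIndepSet G S) {a : V} (ha : a ∈ S) :
    a ∉ nbhd G S := by
  rintro ⟨x, hx, hadj⟩; exact h ha hx hadj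

lemma indep_empty : IsIndepSet G (∅ : Set V) :=
  fun a ha => (Set.notMem_empty a ha).elim

lemma ncard_le_card (S : Set V) : S.ncard ≤ Fintype.card V := by
  have := Set.ncard_le_ncard (Set.subset_univ S) (Set.toFinite _)
  simpa [Set.ncard_univ, Nat.card_eq_fintype_card] using this

lemma bddAbove_diffOf : BddAbove (diffOf G '' {S | IsIndepSet G S}) := by
  refine ⟨(Fintype.card V : ℤ), ?_⟩
  rintro x ⟨S, -, rfl⟩
  have h1 : S.ncard ≤ Fintype.card V := ncard_le_card S
  simp only [diffOf]
  omega

lemma le_critDiff {S : Set V} (h : IsIndepSet G S) : diffOf G S ≤ critDiff G :=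
  le_csSup bddAbove_diffOf ⟨S, h, rfl⟩

/-- Lemma 0: the difference of ANY vertex set is at most the critical difference. -/
lemma diffOf_le_critDiff (X : Set V) : diffOf G X ≤ critDiff G := by
  set W := X \ nbhd G X with hW
  have hWindep : IsIndepSet G W := by
    intro a ha b hb hadj
    exact ha.2 ⟨b, hb.1, hadj⟩
  have hNW : nbhd G W ⊆ nbhd G X \ (X ∩ nbhd G X) := by
    rintro v ⟨w, hw, hadj⟩
    refine ⟨⟨w, hw.1, hadj⟩, ?_⟩
    rintro ⟨hvX, -⟩
    exact hw.2 ⟨v, hvX, hadj.symm⟩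
  have c1 : (X ∩ nbhd G X).ncard + W.ncard = X.ncard :=
    Set.ncard_inter_add_ncard_diff_eq_ncard X (nbhd G X)
  have c2 : (nbhd G W).ncard ≤ (nbhd G X \ (X ∩ nbhd G X)).ncard :=
    Set.ncard_le_ncard hNW (Set.toFinite _)
  have c3 : (nbhd G X ∩ (X ∩ nbhd G X)).ncard + (nbhd G X \ (X ∩ nbhd G X)).ncard
      = (nbhd G X).ncard :=
    Set.ncard_inter_add_ncard_diff_eq_ncard _ _
  have c4 : nbhd G X ∩ (X ∩ nbhd G X) = X ∩ nbhd G X :=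
    Set.inter_eq_right.2 Set.inter_subset_right
  rw [c4] at c3
  have hle : diffOf G X ≤ diffOf G W := by
    simp only [diffOf]
    omega
  exact hle.trans (le_critDiff hWindep)

/-- Hall-type counting bound for critical independent sets. -/
lemma ncard_le_of_subset_nbhd {A S : Set V} (hA : IsCritIndep G A) (hS : S ⊆ nbhd G A) :
    S.ncard ≤ (A ∩ nbhd G S).ncard := by
  set A' := A \ nbhd G S with hA'
  have hA'indep : IsIndepSet G A' := indep_subset hA.1 Set.diff_subset
  have hd : diffOf G A' ≤ critDiff G := le_critDiff hA'indep
  have c1 : (A ∩ nbhd G S).ncard + A'.ncard = A.ncard :=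
    Set.ncard_inter_add_ncard_diff_eq_ncard A (nbhd G S)
  have hsub : nbhd G A' ⊆ nbhd G A \ S := by
    rintro v ⟨a, ha, hadj⟩
    exact ⟨⟨a, ha.1, hadj⟩, fun hvS => ha.2 ⟨v, hvS, hadj.symm⟩⟩
  have c2 : (nbhd G A').ncard ≤ (nbhd G A \ S).ncard :=
    Set.ncard_le_ncard hsub (Set.toFinite _)
  have c3 : (nbhd G A ∩ S).ncard + (nbhd G A \ S).ncard = (nbhd G A).ncard :=
    Set.ncard_inter_add_ncard_diff_eq_ncard _ _
  have c4 : nbhd G A ∩ S = S := Set.inter_eq_right.2 hS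
  rw [c4] at c3
  have hc : diffOf G A = critDiff G := hA.2
  simp only [diffOf] at hd hc
  omega

/-- The intersection of two critical independent sets is critical;
the union has critical difference. -/
lemma crit_union_inter {A B : Set V} (hA : IsCritIndep G A) (hB : IsCritIndep G B) :
    diffOf G (A ∪ B) = critDiff G ∧ IsCritIndep G (A ∩ B) := by
  have hIindep : IsIndepSet G (A ∩ B) := indep_subset hA.1 Set.inter_subset_left
  have h1 : (A ∪ B).ncard + (A ∩ B).ncard = A.ncard + B.ncard :=
    Set.ncard_union_add_ncard_inter A B
  have h2 : nbhd G (A ∪ B) = nbhd G A ∪ nbhd G B := nbhd_union A B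
  have h3 : (nbhd G A ∪ nbhd G B).ncard + (nbhd G A ∩ nbhd G B).ncard
      = (nbhd G A).ncard + (nbhd G B).ncard :=
    Set.ncard_union_add_ncard_inter _ _
  have h4 : nbhd G (A ∩ B) ⊆ nbhd G A ∩ nbhd G B :=
    Set.subset_inter (nbhd_mono Set.inter_subset_left) (nbhd_mono Set.inter_subset_right)
  have h5 : (nbhd G (A ∩ B)).ncard ≤ (nbhd G A ∩ nbhd G B).ncard :=
    Set.ncard_le_ncard h4 (Set.toFinite _)
  have h6 := diffOf_le_critDiff (G := G) (A ∪ B)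
  have h7 := le_critDiff hIindep
  have hA2 := hA.2
  have hB2 := hB.2
  simp only [diffOf, h2] at h6 h7 hA2 hB2
  refine ⟨?_, hIindep, ?_⟩ <;> simp only [diffOf, h2] <;> omega

/-- Key construction: `A ∪ (B \ N[A])` is critical independent. -/
lemma crit_union_sdiff {A B : Set V} (hA : IsCritIndep G A) (hB : IsCritIndep G B) :
    IsCritIndep G (A ∪ (B \ closedNbhd G A)) := by
  set T := B \ closedNbhd G A with hT
  set L := B ∩ nbhd G A with hL
  set S := A ∪ T with hSdef
  have hSindep : IsIndepSet G S := by
    rintro a (haA | haT) b (hbA | hbT) hadj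
    · exact hA.1 haA hbA hadj
    · exact hbT.2 (Or.inr ⟨a, haA, hadj.symm⟩)
    · exact haT.2 (Or.inr ⟨b, hbA, hadj⟩)
    · exact hB.1 haT.1 hbT.1 hadj
  have hUnion : A ∪ B = S ∪ L := by
    ext x
    constructor
    · rintro (hxA | hxB)
      · exact Or.inl (Or.inl hxA)
      · by_cases hx : x ∈ nbhd G A
        · exact Or.inr ⟨hxB, hx⟩
        · by_cases hx2 : x ∈ A
          · exact Or.inl (Or.inl hx2)
          · exact Or.inl (Or.inr ⟨hxB, fun h => h.elim hx2 hx⟩)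
    · rintro ((hxA | hxT) | hxL)
      exacts [Or.inl hxA, Or.inr hxT.1, Or.inr hxL.1]
  have hdisj : Disjoint S L := by
    rw [Set.disjoint_left]
    rintro x (hxA | hxT) ⟨hxB, hxN⟩
    · exact indep_not_mem_nbhd hA.1 hxA hxN
    · exact hxT.2 (Or.inr hxN)
  have hANS : ∀ x ∈ A, x ∉ nbhd G S := by
    rintro x hxA ⟨s, hs, hadj⟩
    rcases hs with hsA | hsT
    · exact hA.1 hxA hsA hadj
    · exact hsT.2 (Or.inr ⟨x, hxA, hadj.symm⟩)
  have hHall : L.ncard ≤ (A ∩ nbhd G L).ncard :=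
    ncard_le_of_subset_nbhd hA Set.inter_subset_right
  have hsub2 : A ∩ nbhd G L ⊆ nbhd G L \ nbhd G S := by
    rintro x ⟨hxA, hxN⟩
    exact ⟨hxN, hANS x hxA⟩
  have hkey : L.ncard ≤ (nbhd G L \ nbhd G S).ncard :=
    hHall.trans (Set.ncard_le_ncard hsub2 (Set.toFinite _))
  have hcardU : (S ∪ L).ncard = S.ncard + L.ncard :=
    Set.ncard_union_eq hdisj (Set.toFinite _) (Set.toFinite _)
  have hcardN : (nbhd G S ∪ nbhd G L).ncard
      = (nbhd G S).ncard + (nbhd G L \ nbhd G S).ncard := by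
    rw [← Set.union_diff_self,
      Set.ncard_union_eq disjoint_sdiff_self_right (Set.toFinite _) (Set.toFinite _)]
  have hdU : diffOf G (A ∪ B) = critDiff G := (crit_union_inter hA hB).1
  have hdS := le_critDiff hSindep
  refine ⟨hSindep, ?_⟩
  rw [hUnion] at hdU
  simp only [diffOf, nbhd_union] at hdU hdS ⊢
  omega

lemma ncard_inter_nbhd_le {A B : Set V} (hA : IsCritIndep G A) (hB : IsCritIndep G B) :
    (B ∩ nbhd G A).ncard ≤ (A ∩ nbhd G B).ncard := by
  have h1 : (B ∩ nbhd G A).ncard ≤ (A ∩ nbhd G (B ∩ nbhd G A)).ncard :=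
    ncard_le_of_subset_nbhd hA Set.inter_subset_right
  refine h1.trans (Set.ncard_le_ncard ?_ (Set.toFinite _))
  exact Set.inter_subset_inter (le_refl A) (nbhd_mono Set.inter_subset_left)

/-- Every critical independent set is contained in a maximum critical independent set. -/
lemma exists_maxCrit_superset {A : Set V} (hA : IsCritIndep G A) :
    ∃ M, IsMaxCritIndep G M ∧ A ⊆ M := by
  set s : Set ℕ := {n | ∃ B, (IsCritIndep G B ∧ A ⊆ B) ∧ B.ncard = n} with hs
  have hne : s.Nonempty := ⟨A.ncard, A, ⟨hA, subset_rfl⟩, rfl⟩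
  have hbdd : BddAbove s := by
    refine ⟨Fintype.card V, ?_⟩
    rintro n ⟨B, -, rfl⟩
    exact ncard_le_card B
  obtain ⟨M, ⟨hM, hAM⟩, hMcard⟩ := Nat.sSup_mem hne hbdd
  refine ⟨M, ⟨hM, ?_⟩, hAM⟩
  intro B hB
  have hScrit := crit_union_sdiff hM hB
  have hle : (M ∪ (B \ closedNbhd G M)).ncard ≤ M.ncard := by
    rw [hMcard]
    exact le_csSup hbdd ⟨_, ⟨hScrit, hAM.trans Set.subset_union_left⟩, rfl⟩
  have hdisj : Disjoint M (B \ closedNbhd G M) := by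
    rw [Set.disjoint_left]
    intro x hxM hx
    exact hx.2 (Or.inl hxM)
  have hcard : (M ∪ (B \ closedNbhd G M)).ncard = M.ncard + (B \ closedNbhd G M).ncard :=
    Set.ncard_union_eq hdisj (Set.toFinite _) (Set.toFinite _)
  have h0 : (B \ closedNbhd G M).ncard = 0 := by omega
  have hBsub : B ⊆ closedNbhd G M :=
    Set.diff_eq_empty.1 ((Set.ncard_eq_zero (Set.toFinite _)).1 h0)
  have hBeq : B = (B ∩ M) ∪ (B ∩ nbhd G M) := by
    ext x
    constructor
    · intro hx
      rcases hBsub hx with h | h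
      exacts [Or.inl ⟨hx, h⟩, Or.inr ⟨hx, h⟩]
    · rintro (h | h)
      exacts [h.1, h.1]
  have hd1 : Disjoint (B ∩ M) (B ∩ nbhd G M) := by
    rw [Set.disjoint_left]
    rintro x ⟨-, hxM⟩ ⟨-, hxN⟩
    exact indep_not_mem_nbhd hM.1 hxM hxN
  have hc1 : B.ncard = (B ∩ M).ncard + (B ∩ nbhd G M).ncard := by
    conv_lhs => rw [hBeq]
    exact Set.ncard_union_eq hd1 (Set.toFinite _) (Set.toFinite _)
  have hc2 : (B ∩ nbhd G M).ncard ≤ (M ∩ nbhd G B).ncard := ncard_inter_nbhd_le hM hB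
  have hd2 : Disjoint (B ∩ M) (M ∩ nbhd G B) := by
    rw [Set.disjoint_left]
    rintro x ⟨hxB, -⟩ ⟨-, hxN⟩
    exact indep_not_mem_nbhd hB.1 hxB hxN
  have hc3 : (B ∩ M).ncard + (M ∩ nbhd G B).ncard ≤ M.ncard := by
    rw [← Set.ncard_union_eq hd2 (Set.toFinite _) (Set.toFinite _)]
    exact Set.ncard_le_ncard
      (Set.union_subset Set.inter_subset_right Set.inter_subset_left) (Set.toFinite _)
  omega

lemma exists_critIndep : ∃ A : Set V, IsCritIndep G A := by
  have hne : (diffOf G '' {S | IsIndepSet G S}).Nonempty :=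
    ⟨diffOf G ∅, ∅, indep_empty, rfl⟩
  have hfin : (diffOf G '' {S | IsIndepSet G S}).Finite :=
    (Set.toFinite _).image _
  obtain ⟨A, hA, hEq⟩ := hne.csSup_mem hfin
  exact ⟨A, hA, hEq⟩

lemma exists_maxCritIndep : ∃ M : Set V, IsMaxCritIndep G M := by
  obtain ⟨A, hA⟩ := exists_critIndep (G := G)
  obtain ⟨M, hM, -⟩ := exists_maxCrit_superset hA
  exact ⟨M, hM⟩

/-- Every critical independent set lies in the closed neighborhood of any
maximum critical independent set. -/
lemma crit_subset_closedNbhd {A M : Set V} (hA : IsCritIndep G A)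
    (hM : IsMaxCritIndep G M) : A ⊆ closedNbhd G M := by
  have hScrit := crit_union_sdiff hM.1 hA
  have hle : (M ∪ (A \ closedNbhd G M)).ncard ≤ M.ncard := hM.2 _ hScrit
  have hdisj : Disjoint M (A \ closedNbhd G M) := by
    rw [Set.disjoint_left]
    intro x hxM hx
    exact hx.2 (Or.inl hxM)
  have hcard : (M ∪ (A \ closedNbhd G M)).ncard = M.ncard + (A \ closedNbhd G M).ncard :=
    Set.ncard_union_eq hdisj (Set.toFinite _) (Set.toFinite _)
  have h0 : (A \ closedNbhd G M).ncard = 0 := by omega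
  exact Set.diff_eq_empty.1 ((Set.ncard_eq_zero (Set.toFinite _)).1 h0)

/-- The neighborhood of every critical independent set lies in the closed
neighborhood of any maximum critical independent set. -/
lemma nbhd_crit_subset {A M : Set V} (hA : IsCritIndep G A) (hM : IsMaxCritIndep G M) :
    nbhd G A ⊆ M ∪ nbhd G M := by
  have hAsub : A ⊆ closedNbhd G M := crit_subset_closedNbhd hA hM
  have e2 : diffOf G (A ∪ M) = critDiff G := (crit_union_inter hA hM.1).1
  have e4 : diffOf G M = critDiff G := hM.1.2
  have h1 : (nbhd G A ∪ nbhd G M).ncard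
      = (nbhd G M).ncard + (nbhd G A \ nbhd G M).ncard := by
    rw [Set.union_comm, ← Set.union_diff_self,
      Set.ncard_union_eq disjoint_sdiff_self_right (Set.toFinite _) (Set.toFinite _)]
  have h2 : (A ∪ M).ncard = M.ncard + (A \ M).ncard := by
    rw [Set.union_comm, ← Set.union_diff_self,
      Set.ncard_union_eq disjoint_sdiff_self_right (Set.toFinite _) (Set.toFinite _)]
  have hAM : A \ M = A ∩ nbhd G M := by
    ext x
    constructor
    · intro hx
      rcases hAsub hx.1 with h | h
      · exact absurd h hx.2
      · exact ⟨hx.1, h⟩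
    · rintro ⟨hxA, hxN⟩
      exact ⟨hxA, fun hxM => indep_not_mem_nbhd hM.1.1 hxM hxN⟩
  have hc2 : (A ∩ nbhd G M).ncard ≤ (M ∩ nbhd G A).ncard := ncard_inter_nbhd_le hM.1 hA
  have hsub : M ∩ nbhd G A ⊆ nbhd G A \ nbhd G M := by
    rintro x ⟨hxM, hxN⟩
    exact ⟨hxN, fun h => indep_not_mem_nbhd hM.1.1 hxM h⟩
  have hcard_le : (nbhd G A \ nbhd G M).ncard ≤ (M ∩ nbhd G A).ncard := by
    rw [hAM] at h2
    simp only [diffOf, nbhd_union] at e2 e4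
    omega
  have heq : M ∩ nbhd G A = nbhd G A \ nbhd G M :=
    Set.eq_of_subset_of_ncard_le hsub hcard_le (Set.toFinite _)
  intro v hv
  by_cases h : v ∈ nbhd G M
  · exact Or.inr h
  · have hmem : v ∈ nbhd G A \ nbhd G M := ⟨hv, h⟩
    rw [← heq] at hmem
    exact Or.inl hmem.1

end AuxLemmas

/-- For every finite simple graph `G`, `N(diadem G) \ diadem G` equals the intersection of
`N(A)` over all maximum critical independent sets `A` of `G`. -/
theorem stmt4 {V : Type*} [Fintype V] (G : SimpleGraph V) :
    nbhd G (diadem G) \ diadem G = ⋂ A ∈ {A : Set V | IsMaxCritIndep G A}, nbhd G A := by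
  obtain ⟨M₀, hM₀⟩ := exists_maxCritIndep (G := G)
  ext v
  simp only [Set.mem_iInter, Set.mem_setOf_eq, Set.mem_diff]
  constructor
  · rintro ⟨hvN, hvD⟩ M hM
    have hMcrit : M ∈ {A : Set V | IsCritIndep G A} := hM.1
    obtain ⟨x, hxD, hadj⟩ := hvN
    obtain ⟨A, hA, hxA⟩ := hxD
    have hvA : v ∈ nbhd G A := ⟨x, hxA, hadj⟩
    rcases nbhd_crit_subset hA hM hvA with h | h
    · exact absurd (Set.mem_sUnion.2 ⟨M, hMcrit, h⟩) hvD
    · exact h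
  · intro h
    have hM₀crit : M₀ ∈ {A : Set V | IsCritIndep G A} := hM₀.1
    have hvM₀ : v ∈ nbhd G M₀ := h M₀ hM₀
    refine ⟨nbhd_mono (fun x hx => Set.mem_sUnion.2 ⟨M₀, hM₀crit, hx⟩) hvM₀, ?_⟩
    rintro ⟨A, hA, hvA⟩
    obtain ⟨M₁, hM₁, hAM₁⟩ := exists_maxCrit_superset hA
    obtain ⟨m, hm, hadj⟩ := h M₁ hM₁
    exact hM₁.1.1 (hAM₁ hvA) hm hadj
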